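/- Let H : F^p_α → L^p_α be a compact operator. Then for every g ∈ F^p_α one has ‖C_z H C_{−z} g‖_{L^p_α} → 0 as |z| → ∞. -/

import Mathlib

open MeasureTheory Complex Filter Topology Bornology
open scoped ENNReal NNReal

noncomputable section

/-- `ℂ^n` with the Euclidean norm. -/
abbrev Cn (n : ℕ) := EuclideanSpace ℂ (Fin n)

instance (n : ℕ) : MeasurableSpace (Cn n) := borel _
instance (n : ℕ) : BorelSpace (Cn n) := ⟨rfl⟩

/-- The exponent `p` as an element of `ℝ≥0∞`. -/
abbrev pe (p : ℝ) : ℝ≥0∞ := ENNReal.ofReal p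

/-- The sesquilinear pairing `⟨w,z⟩ = ∑ w_j * conj (z_j)`. -/
def herm {n : ℕ} (w z : Cn n) : ℂ := ∑ j, w j * (starRingEnd ℂ) (z j)

/-- The Gaussian measure `dμ_β = (β/π)^n e^{-β|z|²} dv` on `ℂ^n`. -/
def gaussian (n : ℕ) (β : ℝ) : Measure (Cn n) :=
  volume.withDensity fun z => ENNReal.ofReal ((β / Real.pi) ^ n * Real.exp (-β * ‖z‖ ^ 2))

/-- The Fock space `F^p_α`: the (closed) subspace of `L^p` consisting of the
(a.e. equivalence classes of) entire functions. -/
def fockSubmodule (n : ℕ) (p : ℝ≥0∞) (μ : Measure (Cn n)) :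
    Submodule ℂ (Lp ℂ p μ) where
  carrier := {f | ∃ g : Cn n → ℂ, Differentiable ℂ g ∧ (f : Cn n → ℂ) =ᵐ[μ] g}
  add_mem' := by
    rintro f₁ f₂ ⟨g₁, hg₁, he₁⟩ ⟨g₂, hg₂, he₂⟩
    exact ⟨g₁ + g₂, hg₁.add hg₂, (Lp.coeFn_add f₁ f₂).trans (he₁.add he₂)⟩
  zero_mem' := ⟨0, differentiable_const 0, Lp.coeFn_zero ℂ p μ⟩
  smul_mem' := by
    rintro c f ⟨g, hg, he⟩
    exact ⟨c • g, hg.const_smul c, (Lp.coeFn_smul c f).trans (he.const_smul c)⟩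

/-- Defining property of the family of weighted shifts
`(C_z f)(w) = f(w-z) · e^{α⟨w,z⟩ - (α/2)|z|²}` on `L^p_α` over `ℂ^n`. -/
def IsFockShiftFamily (n : ℕ) (α : ℝ) (p : ℝ≥0∞) [Fact (1 ≤ p)] (μ : Measure (Cn n))
    (C : Cn n → (Lp ℂ p μ →L[ℂ] Lp ℂ p μ)) : Prop :=
  ∀ z : Cn n, ∀ f : Lp ℂ p μ,
    (C z f : Cn n → ℂ) =ᵐ[μ]
      fun w => f (w - z) * Complex.exp ((α : ℂ) * herm w z - (α : ℂ) / 2 * (‖z‖ : ℂ) ^ 2)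

/-- Defining properties of the projection `P_α` of `L^p_α` onto the Fock space `F^p_α`:
the integral formula `(P_α f)(z) = ∫ f(w) e^{α⟨z,w⟩} dμ_α(w)`, together with the fact that it is
a projection onto `F^p_α`. -/
def IsFockProjection (n : ℕ) (α : ℝ) (p : ℝ≥0∞) [Fact (1 ≤ p)] (μ : Measure (Cn n))
    (P : Lp ℂ p μ →L[ℂ] Lp ℂ p μ) : Prop :=
  (∀ f : Lp ℂ p μ, ∀ᵐ z ∂μ,
      (P f : Cn n → ℂ) z
        = ∫ w, (f : Cn n → ℂ) w * Complex.exp ((α : ℂ) * herm z w) ∂(gaussian n α))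
    ∧ (∀ f : Lp ℂ p μ, P f ∈ fockSubmodule n p μ)
    ∧ (∀ f ∈ fockSubmodule n p μ, P f = f)

/-- `M` is the operator of multiplication by the symbol `h` on `L^p`. -/
def IsMulOpBy {n : ℕ} {p : ℝ≥0∞} [Fact (1 ≤ p)] {μ : Measure (Cn n)}
    (h : Cn n → ℂ) (M : Lp ℂ p μ →L[ℂ] Lp ℂ p μ) : Prop :=
  ∀ g : Lp ℂ p μ, (M g : Cn n → ℂ) =ᵐ[μ] fun w => h w * g w

/-- `A` is a band operator with respect to the metric `d`: there is a band width `ω > 0` such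
that `M_f A M_g = 0` whenever `f, g ∈ L^∞` have essential supports of `d`-distance
greater than `ω`. -/
def IsBandOp {n : ℕ} {p : ℝ≥0∞} [Fact (1 ≤ p)] {μ : Measure (Cn n)} (d : Cn n → Cn n → ℝ)
    (A : Lp ℂ p μ →L[ℂ] Lp ℂ p μ) : Prop :=
  ∃ ω > (0 : ℝ), ∀ (f g : Cn n → ℂ) (S T : Set (Cn n)),
    Measurable f → Measurable g →
    (∃ R, ∀ w, ‖f w‖ ≤ R) → (∃ R, ∀ w, ‖g w‖ ≤ R) →
    (∀ᵐ w ∂μ, w ∉ S → f w = 0) → (∀ᵐ w ∂μ, w ∉ T → g w = 0) →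
    (∀ s ∈ S, ∀ t ∈ T, ω < d s t) →
    ∀ u v : Lp ℂ p μ, (v : Cn n → ℂ) =ᵐ[μ] (fun w => g w * u w) →
      (fun w => f w * (A v : Cn n → ℂ) w) =ᵐ[μ] 0

/-- `A` is band-dominated: it is a norm limit of band operators. -/
def IsBandDominated {n : ℕ} {p : ℝ≥0∞} [Fact (1 ≤ p)] {μ : Measure (Cn n)}
    (d : Cn n → Cn n → ℝ) (A : Lp ℂ p μ →L[ℂ] Lp ℂ p μ) : Prop :=
  A ∈ closure {B : Lp ℂ p μ →L[ℂ] Lp ℂ p μ | IsBandOp d B}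

/-! ### The unit ball / Bergman space setting -/

/-- The open unit ball `𝔹_n ⊆ ℂ^n`. -/
def unitBall (n : ℕ) : Set (Cn n) := Metric.ball 0 1

/-- The measure `dμ_α = c_α (1-|z|²)^α dv` on `𝔹_n`,
with `c_α = Γ(n+α+1)/(n! Γ(α+1))`. -/
def bergMeasure (n : ℕ) (α : ℝ) : Measure (Cn n) :=
  (volume.restrict (unitBall n)).withDensity fun z =>
    ENNReal.ofReal
      ((Real.Gamma (n + α + 1) / ((Nat.factorial n : ℝ) * Real.Gamma (α + 1)))
        * (1 - ‖z‖ ^ 2) ^ α)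

/-- The Möbius involution `φ_z` of `𝔹_n` interchanging `0` and `z`:
`φ_z(w) = (z - P_z w - s_z Q_z w)/(1 - ⟨w,z⟩)` where `P_z` is the orthogonal projection onto
`ℂ z`, `Q_z = I - P_z` and `s_z = √(1-|z|²)`. -/
def mobius {n : ℕ} (z w : Cn n) : Cn n :=
  (1 - herm w z)⁻¹ •
    ((z - (herm w z / herm z z) • z) -
      ((Real.sqrt (1 - ‖z‖ ^ 2) : ℝ) : ℂ) • (w - (herm w z / herm z z) • z))

/-- The Bergman metric `d(z,w) = (1/2) log((1+|φ_z(w)|)/(1-|φ_z(w)|))` on `𝔹_n`. -/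
def bergDist {n : ℕ} (z w : Cn n) : ℝ :=
  (1 / 2) * Real.log ((1 + ‖mobius z w‖) / (1 - ‖mobius z w‖))

/-- The filter of `z ∈ 𝔹_n` with `|z| → 1`, i.e. `z` tending to the boundary of the ball. -/
def ballBoundary (n : ℕ) : Filter (Cn n) :=
  Filter.comap (fun z => ‖z‖) (𝓝 1) ⊓ Filter.principal (unitBall n)

/-- The Bergman space `A^p_α`: the (closed) subspace of `L^p` consisting of the
(a.e. equivalence classes of) holomorphic functions on the ball. -/
def bergSubmodule (n : ℕ) (p : ℝ≥0∞) (μ : Measure (Cn n)) :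
    Submodule ℂ (Lp ℂ p μ) where
  carrier := {f | ∃ g : Cn n → ℂ, DifferentiableOn ℂ g (unitBall n) ∧ (f : Cn n → ℂ) =ᵐ[μ] g}
  add_mem' := by
    rintro f₁ f₂ ⟨g₁, hg₁, he₁⟩ ⟨g₂, hg₂, he₂⟩
    exact ⟨g₁ + g₂, hg₁.add hg₂, (Lp.coeFn_add f₁ f₂).trans (he₁.add he₂)⟩
  zero_mem' := ⟨0, differentiableOn_const 0, Lp.coeFn_zero ℂ p μ⟩
  smul_mem' := by
    rintro c f ⟨g, hg, he⟩
    exact ⟨c • g, hg.const_smul c, (Lp.coeFn_smul c f).trans (he.const_smul c)⟩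

/-- Defining property of the family of reflections
`(C_z f)(w) = f(φ_z(w)) (1-|z|²)^{(n+1+α)/p} / (1-⟨w,z⟩)^{2(n+1+α)/p}` on `L^p_α` over `𝔹_n`. -/
def IsBergReflFamily (n : ℕ) (α p : ℝ) [Fact (1 ≤ pe p)] (μ : Measure (Cn n))
    (C : Cn n → (Lp ℂ (pe p) μ →L[ℂ] Lp ℂ (pe p) μ)) : Prop :=
  ∀ z : Cn n, ∀ f : Lp ℂ (pe p) μ,
    (C z f : Cn n → ℂ) =ᵐ[μ] fun w =>
      f (mobius z w) * (((1 - ‖z‖ ^ 2) ^ ((n + 1 + α) / p) : ℝ) : ℂ) /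
        (1 - herm w z) ^ ((2 * (n + 1 + α) / p : ℝ) : ℂ)

/-- Defining properties of the Bergman projection `P_α` of `L^p_α` onto `A^p_α`:
the integral formula `(P_α f)(z) = ∫ f(w) (1-⟨z,w⟩)^{-(n+1+α)} dμ_α(w)`, together with the fact
that it is a projection onto `A^p_α`. -/
def IsBergProjection (n : ℕ) (α : ℝ) (p : ℝ≥0∞) [Fact (1 ≤ p)] (μ : Measure (Cn n))
    (P : Lp ℂ p μ →L[ℂ] Lp ℂ p μ) : Prop :=
  (∀ f : Lp ℂ p μ, ∀ᵐ z ∂μ,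
      (P f : Cn n → ℂ) z
        = ∫ w, (f : Cn n → ℂ) w * (1 - herm z w) ^ ((-(n + 1 + α) : ℝ) : ℂ) ∂(bergMeasure n α))
    ∧ (∀ f : Lp ℂ p μ, P f ∈ bergSubmodule n p μ)
    ∧ (∀ f ∈ bergSubmodule n p μ, P f = f)

/-!
Since `C_{-z}` is an isometry that translates supports by `-z`, up to an `L^p` error that is
uniformly small in `z` the function `C_{-z} g` lives on a ball of fixed radius `R` around `-z`. So a sum of `m` such functions with mutually far apart `z`s
has norm at most `m^{1/p} ‖g‖ + m · (tail of g outside the R-ball)`, which is `o(m)` as `p > 1`.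
A compact operator cannot keep such a family away from zero: a subsequence of the images would
converge to some `y ≠ 0`, and the image of a sum of `m` of these terms would have norm about
`m ‖y‖`.
-/

theorem eLpNorm_sum_indicator_le_of_pairwiseDisjoint {X ι E : Type*} [MeasurableSpace X]
    {μ : Measure X} [NormedAddCommGroup E] {p : ℝ≥0∞} (hp0 : p ≠ 0) (hp : p ≠ ∞)
    {t : Finset ι} {s : ι → Set X} (hdisj : (t : Set ι).PairwiseDisjoint s)
    (hs : ∀ j, MeasurableSet (s j)) {f : ι → X → E} (hf : ∀ j, AEStronglyMeasurable (f j) μ)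
    {L : ℝ≥0∞} (hL : ∀ j ∈ t, eLpNorm ((s j).indicator (f j)) p μ ≤ L) :
    eLpNorm (∑ j ∈ t, (s j).indicator (f j)) p μ ≤ (t.card : ℝ≥0∞) ^ (1 / p.toReal) * L := by
  set q := p.toReal
  have hq : 0 < q := ENNReal.toReal_pos hp0 hp
  simp only [eLpNorm_eq_eLpNorm' hp0 hp] at hL ⊢
  have hpointwise : ∀ w, ‖(∑ j ∈ t, (s j).indicator (f j)) w‖ₑ ^ q
      ≤ ∑ j ∈ t, ‖(s j).indicator (f j) w‖ₑ ^ q := by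
    intro w
    by_cases hw : ∃ j ∈ t, w ∈ s j
    · obtain ⟨j, hjt, hwj⟩ := hw
      have hsingle : (∑ i ∈ t, (s i).indicator (f i)) w = (s j).indicator (f j) w := by
        rw [Finset.sum_apply]
        refine Finset.sum_eq_single_of_mem j hjt fun i hit hij => ?_
        exact Set.indicator_of_notMem (fun hwi => hij (hdisj.elim_set hit hjt w hwi hwj)) _
      rw [hsingle]
      exact Finset.single_le_sum (f := fun i => ‖(s i).indicator (f i) w‖ₑ ^ q)
        (fun _ _ => zero_le) hjt
    · push Not at hw
      have hzero : (∑ i ∈ t, (s i).indicator (f i)) w = 0 := by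
        rw [Finset.sum_apply]
        exact Finset.sum_eq_zero fun i hi => Set.indicator_of_notMem (hw i hi) _
      simp [hzero, ENNReal.zero_rpow_of_pos hq]
  have hpow : eLpNorm' (∑ j ∈ t, (s j).indicator (f j)) q μ ^ q ≤ t.card * L ^ q :=
    calc eLpNorm' (∑ j ∈ t, (s j).indicator (f j)) q μ ^ q
        = ∫⁻ w, ‖(∑ j ∈ t, (s j).indicator (f j)) w‖ₑ ^ q ∂μ :=
          (lintegral_rpow_enorm_eq_rpow_eLpNorm' hq).symm
      _ ≤ ∫⁻ w, ∑ j ∈ t, ‖(s j).indicator (f j) w‖ₑ ^ q ∂μ := lintegral_mono hpointwise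
      _ = ∑ j ∈ t, ∫⁻ w, ‖(s j).indicator (f j) w‖ₑ ^ q ∂μ :=
          lintegral_finsetSum' _ fun j _ => ((hf j).indicator (hs j)).enorm.pow_const q
      _ ≤ ∑ _j ∈ t, L ^ q := Finset.sum_le_sum fun j hj =>
          (lintegral_rpow_enorm_eq_rpow_eLpNorm' hq).trans_le
            (ENNReal.rpow_le_rpow (hL j hj) hq.le)
      _ = t.card * L ^ q := by rw [Finset.sum_const, nsmul_eq_mul]
  calc eLpNorm' (∑ j ∈ t, (s j).indicator (f j)) q μ
      = (eLpNorm' (∑ j ∈ t, (s j).indicator (f j)) q μ ^ q) ^ (1 / q) := by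
        rw [one_div, ENNReal.rpow_rpow_inv hq.ne']
    _ ≤ (t.card * L ^ q) ^ (1 / q) := ENNReal.rpow_le_rpow hpow (by positivity)
    _ = (t.card : ℝ≥0∞) ^ (1 / q) * L := by
        rw [ENNReal.mul_rpow_of_nonneg _ _ (by positivity), one_div, ENNReal.rpow_rpow_inv hq.ne']

theorem MeasureTheory.MemLp.tendsto_eLpNorm_indicator_compl_closedBall {X E : Type*} [MetricSpace X]
    [MeasurableSpace X] [BorelSpace X] [CompleteSpace X] [SecondCountableTopology X]
    {μ : Measure X} [NormedAddCommGroup E] {p : ℝ≥0∞} {f : X → E} (hf : MemLp f p μ)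
    (hp0 : p ≠ 0) (hp : p ≠ ∞) (x : X) :
    Tendsto (fun r : ℝ => eLpNorm ((Metric.closedBall x r)ᶜ.indicator f) p μ) atTop (𝓝 0) := by
  set ν := μ.withDensity fun a => ‖f a‖ₑ ^ p.toReal
  have : IsFiniteMeasure ν :=
    isFiniteMeasure_withDensity (lintegral_rpow_enorm_lt_top_of_eLpNorm_lt_top hp0 hp hf.2).ne
  have hν : Tendsto (fun r : ℝ => ν (Metric.closedBall x r)ᶜ) atTop (𝓝 0) := by
    simpa using tendsto_measure_compl_closedBall_of_isTightMeasureSet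
      (isTightMeasureSet_singleton (μ := ν)) x
  have htail : ∀ r, eLpNorm ((Metric.closedBall x r)ᶜ.indicator f) p μ
      = ν (Metric.closedBall x r)ᶜ ^ (1 / p.toReal) := fun r => by
    rw [eLpNorm_indicator_eq_eLpNorm_restrict Metric.isClosed_closedBall.measurableSet.compl,
      eLpNorm_eq_lintegral_rpow_enorm_toReal hp0 hp,
      withDensity_apply _ Metric.isClosed_closedBall.measurableSet.compl]
  simp_rw [htail]
  have h := ((ENNReal.continuous_rpow_const (y := 1 / p.toReal)).tendsto 0).comp hν
  rwa [ENNReal.zero_rpow_of_pos (one_div_pos.2 (ENNReal.toReal_pos hp0 hp))] at h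

theorem pairwiseDisjoint_closedBall_neg {E : Type*} [SeminormedAddCommGroup E] {R : ℝ}
    {ζ : ℕ → E} (hζ : ∀ i j, i < j → ‖ζ i‖ + 2 * R < ‖ζ j‖) (t : Set ℕ) :
    t.PairwiseDisjoint fun j => Metric.closedBall (-ζ j) R := by
  have key : ∀ i j, i < j →
      Disjoint (Metric.closedBall (-ζ i) R) (Metric.closedBall (-ζ j) R) := by
    intro i j hij
    refine Metric.closedBall_disjoint_closedBall ?_
    calc R + R < ‖ζ j‖ - ‖ζ i‖ := by linarith [hζ i j hij]
      _ ≤ ‖ζ j - ζ i‖ := norm_sub_norm_le _ _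
      _ = dist (-ζ i) (-ζ j) := by rw [dist_neg_neg, dist_eq_norm']
  intro i _ j _ hij
  rcases hij.lt_or_gt with h | h
  · exact key i j h
  · exact (key j i h).symm

theorem card_mul_sub_le_norm_sum (𝕜 : Type*) {ι E : Type*} [RCLike 𝕜] [NormedAddCommGroup E]
    [NormedSpace 𝕜 E] {s : Finset ι} {v : ι → E} {y : E} {δ : ℝ}
    (h : ∀ j ∈ s, ‖v j - y‖ ≤ δ) :
    s.card * (‖y‖ - δ) ≤ ‖∑ j ∈ s, v j‖ := by
  have hdev : ‖∑ j ∈ s, (v j - y)‖ ≤ s.card * δ :=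
    (norm_sum_le _ _).trans (by simpa using Finset.sum_le_sum h)
  have hmain : ∑ j ∈ s, v j - ∑ j ∈ s, (v j - y) = s.card • y := by
    simp [Finset.sum_sub_distrib]
  have := norm_sub_le (∑ j ∈ s, v j) (∑ j ∈ s, (v j - y))
  rw [hmain, RCLike.norm_nsmul 𝕜, nsmul_eq_mul] at this
  linarith

/-- A substitute for weak nullity of `x` along `l` (which on `L^p` would call for its dual): each
index is "far" from eventually all others, and averages of `m` terms at mutually far indices can
be made arbitrarily small. -/
def HasSmallSpreadAverages {ι E : Type*} [SeminormedAddCommGroup E] (l : Filter ι) (x : ι → E) :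
    Prop :=
  ∀ η > 0, ∃ m : ℕ, 0 < m ∧ ∃ far : ι → ι → Prop, (∀ i, ∀ᶠ j in l, far i j) ∧
    ∀ ζ : ℕ → ι, (∀ i j, i < j → far (ζ i) (ζ j)) → ‖∑ j ∈ Finset.range m, x (ζ j)‖ ≤ m * η

theorem IsCompactOperator.tendsto_zero_of_hasSmallSpreadAverages {𝕜 ι E F : Type*} [RCLike 𝕜]
    [NormedAddCommGroup E] [NormedSpace 𝕜 E] [NormedAddCommGroup F] [NormedSpace 𝕜 F]
    {T : E →L[𝕜] F} (hT : IsCompactOperator T) {l : Filter ι} {x : ι → E}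
    (hx : IsBounded (Set.range x)) (hsmall : HasSmallSpreadAverages l x) :
    Tendsto (fun i => T (x i)) l (𝓝 0) := by
  rw [tendsto_zero_iff_norm_tendsto_zero]
  by_contra hT0
  obtain ⟨ε, hε, hfreq⟩ : ∃ ε > 0, ∃ᶠ i in l, ε ≤ ‖T (x i)‖ := by
    simpa [Metric.tendsto_nhds, Filter.not_eventually] using hT0
  obtain ⟨m, hm, far, hfar, hsum⟩ := hsmall (ε / (2 * (‖T‖ + 1))) (by positivity)
  obtain ⟨ζ, hζ⟩ := Set.seq_of_forall_finite_exists
    (P := fun c t => ε ≤ ‖T (x c)‖ ∧ ∀ i ∈ t, far i c) fun t ht =>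
      (hfreq.and_eventually ((eventually_all_finite ht).2 fun i _ => hfar i)).exists
  obtain ⟨K, hK, hxK⟩ := hT.image_subset_compact_of_bounded hx
  obtain ⟨y, -, ψ, hψ, hlim⟩ := hK.tendsto_subseq fun k => hxK ⟨x (ζ k), ⟨ζ k, rfl⟩, rfl⟩
  have hy : ε ≤ ‖y‖ := ge_of_tendsto' hlim.norm fun k => (hζ (ψ k)).1
  obtain ⟨J, hJ⟩ := Metric.tendsto_atTop.1 hlim (ε / 4) (by positivity)
  set ξ : ℕ → ι := fun j => ζ (ψ (J + j))
  have hlower : (m : ℝ) * (‖y‖ - ε / 4) ≤ ‖T (∑ j ∈ Finset.range m, x (ξ j))‖ := by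
    simpa [map_sum] using card_mul_sub_le_norm_sum 𝕜 (s := Finset.range m)
      (v := fun j => T (x (ξ j))) fun j _ => (dist_eq_norm _ y ▸ (hJ (J + j) (by omega)).le)
  have hupper : ‖T (∑ j ∈ Finset.range m, x (ξ j))‖ ≤ ‖T‖ * (m * (ε / (2 * (‖T‖ + 1)))) :=
    (T.le_opNorm _).trans <| by
      gcongr
      exact hsum ξ fun i j hij => (hζ _).2 _ ⟨ψ (J + i), hψ (by omega), rfl⟩
  have hTε : ‖T‖ * (ε / (2 * (‖T‖ + 1))) ≤ ε / 2 := by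
    rw [mul_div_assoc', div_le_div_iff₀ (by positivity) two_pos]
    nlinarith [norm_nonneg T]
  have hm' : (0 : ℝ) < m := Nat.cast_pos.2 hm
  nlinarith

theorem HasSmallSpreadAverages.of_coe {𝕜 ι E : Type*} [RCLike 𝕜] [NormedAddCommGroup E]
    [NormedSpace 𝕜 E] {S : Submodule 𝕜 E} {l : Filter ι} {x : ι → S}
    (h : HasSmallSpreadAverages l fun i => (x i : E)) : HasSmallSpreadAverages l x := by
  simpa only [HasSmallSpreadAverages, ← Submodule.coe_sum, Submodule.norm_coe] using h

theorem exists_nat_rpow_mul_le {q : ℝ} (hq : q < 1) (c : ℝ) {η : ℝ} (hη : 0 < η) :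
    ∃ m : ℕ, 0 < m ∧ (m : ℝ) ^ q * c ≤ m * η := by
  have hlim : Tendsto (fun m : ℕ => (m : ℝ) ^ (q - 1) * c) atTop (𝓝 0) := by
    simpa [neg_sub] using ((tendsto_rpow_neg_atTop (by linarith : 0 < 1 - q)).comp
      tendsto_natCast_atTop_atTop).mul_const c
  obtain ⟨m, hmη, hm⟩ := ((hlim.eventually (gt_mem_nhds hη)).and (eventually_gt_atTop 0)).exists
  have hm' : (0 : ℝ) < m := Nat.cast_pos.2 hm
  refine ⟨m, hm, ?_⟩
  calc (m : ℝ) ^ q * c = (m : ℝ) ^ (q - 1) * c * m := by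
        rw [Real.rpow_sub_one hm'.ne']; field_simp
    _ ≤ η * m := by gcongr
    _ = m * η := mul_comm _ _

theorem gaussian_quasiMeasurePreserving_sub_right {n : ℕ} {β : ℝ} (hβ : 0 < β) (z : Cn n) :
    Measure.QuasiMeasurePreserving (· - z) (gaussian n β) (gaussian n β) := by
  have hdens : Measurable fun w : Cn n =>
      ENNReal.ofReal ((β / Real.pi) ^ n * Real.exp (-β * ‖w‖ ^ 2)) := by fun_prop
  refine (measurePreserving_sub_right volume z).quasiMeasurePreserving.mono
    (withDensity_absolutelyContinuous _ _)
    (withDensity_absolutelyContinuous' hdens.aemeasurable (ae_of_all _ fun w => ?_))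
  simpa using mul_pos (pow_pos (div_pos hβ Real.pi_pos) n) (Real.exp_pos _)

section FockShift

variable {n : ℕ} {α : ℝ} {p : ℝ≥0∞} [Fact (1 ≤ p)] {μ : Measure (Cn n)}
  {C : Cn n → (Lp ℂ p μ →L[ℂ] Lp ℂ p μ)}

theorem IsFockShiftFamily.ae_eq_indicator_preimage (hC : IsFockShiftFamily n α p μ C) {z : Cn n}
    (hμ : Measure.QuasiMeasurePreserving (· - z) μ μ) {u f : Lp ℂ p μ} {s : Set (Cn n)}
    (hu : u =ᵐ[μ] s.indicator f) :
    C z u =ᵐ[μ] ((· - z) ⁻¹' s).indicator (C z f) := by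
  filter_upwards [hC z u, hC z f, hμ.ae_eq hu] with w hu' hf' hw
  simp only [Function.comp_apply] at hw
  by_cases hws : w - z ∈ s
  · simp [Set.indicator_of_mem (show w ∈ (· - z) ⁻¹' s from hws), hu', hf', hw,
      Set.indicator_of_mem hws]
  · simp [Set.indicator_of_notMem (show w ∉ (· - z) ⁻¹' s from hws), hu', hw,
      Set.indicator_of_notMem hws]

theorem IsFockShiftFamily.eLpNorm_indicator_preimage (hC : IsFockShiftFamily n α p μ C)
    (hCiso : ∀ (z : Cn n) (u : Lp ℂ p μ), ‖C z u‖ = ‖u‖) {z : Cn n}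
    (hμ : Measure.QuasiMeasurePreserving (· - z) μ μ) (f : Lp ℂ p μ) {s : Set (Cn n)}
    (hs : MeasurableSet s) :
    eLpNorm (((· - z) ⁻¹' s).indicator (C z f)) p μ = eLpNorm (s.indicator f) p μ := by
  have hmem : MemLp (s.indicator f) p μ := (Lp.memLp f).indicator hs
  have h := hCiso z (hmem.toLp _)
  rw [Lp.norm_def, Lp.norm_def, eLpNorm_congr_ae (hC.ae_eq_indicator_preimage hμ hmem.coeFn_toLp),
    eLpNorm_congr_ae hmem.coeFn_toLp] at h
  refine (ENNReal.toReal_eq_toReal_iff' ?_ hmem.eLpNorm_ne_top).1 h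
  exact ((Lp.memLp (C z f)).indicator (hs.preimage (measurable_sub_const z))).eLpNorm_ne_top

theorem IsFockShiftFamily.enorm_sum_le (hC : IsFockShiftFamily n α p μ C)
    (hCiso : ∀ (z : Cn n) (u : Lp ℂ p μ), ‖C z u‖ = ‖u‖)
    (hμ : ∀ z, Measure.QuasiMeasurePreserving (· - z) μ μ) (hp : p ≠ ∞) (f : Lp ℂ p μ)
    {R : ℝ} {ζ : ℕ → Cn n} (hζ : ∀ i j, i < j → ‖ζ i‖ + 2 * R < ‖ζ j‖) (m : ℕ) :
    ‖∑ j ∈ Finset.range m, C (-ζ j) f‖ₑ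
      ≤ (m : ℝ≥0∞) ^ (1 / p.toReal) * ‖f‖ₑ
        + m * eLpNorm ((Metric.closedBall 0 R)ᶜ.indicator f) p μ := by
  have hp0 : p ≠ 0 := (zero_lt_one.trans_le Fact.out).ne'
  set B : ℕ → Set (Cn n) := fun j => Metric.closedBall (-ζ j) R
  set F : ℕ → Cn n → ℂ := fun j => C (-ζ j) f
  have hF : ∀ j, AEStronglyMeasurable (F j) μ := fun j => Lp.aestronglyMeasurable _
  have hB : ∀ j, MeasurableSet (B j) := fun j => Metric.isClosed_closedBall.measurableSet
  have hBF : ∀ j, AEStronglyMeasurable ((B j).indicator (F j)) μ := fun j => (hF j).indicator (hB j)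
  have hBF' : ∀ j, AEStronglyMeasurable ((B j)ᶜ.indicator (F j)) μ := fun j =>
    (hF j).indicator (hB j).compl
  have hsplit : ∑ j ∈ Finset.range m, F j = ∑ j ∈ Finset.range m, (B j).indicator (F j)
      + ∑ j ∈ Finset.range m, (B j)ᶜ.indicator (F j) := by
    rw [← Finset.sum_add_distrib]
    simp only [Set.indicator_self_add_compl]
  have hcore : eLpNorm (∑ j ∈ Finset.range m, (B j).indicator (F j)) p μ
      ≤ (m : ℝ≥0∞) ^ (1 / p.toReal) * ‖f‖ₑ := by
    simpa using eLpNorm_sum_indicator_le_of_pairwiseDisjoint (t := Finset.range m) hp0 hp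
      (pairwiseDisjoint_closedBall_neg hζ _) hB hF (L := ‖f‖ₑ) fun j _ =>
        (eLpNorm_indicator_le _).trans_eq <| by
          rw [← Lp.enorm_def, ← ofReal_norm, ← ofReal_norm, hCiso]
  have htail : ∀ j, eLpNorm ((B j)ᶜ.indicator (F j)) p μ
      = eLpNorm ((Metric.closedBall 0 R)ᶜ.indicator f) p μ := fun j => by
    have hpre : (· - -ζ j) ⁻¹' (Metric.closedBall (0 : Cn n) R)ᶜ = (B j)ᶜ := by
      ext w; simp [B, dist_eq_norm]
    rw [← hpre]
    exact hC.eLpNorm_indicator_preimage hCiso (hμ _) f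
      Metric.isClosed_closedBall.measurableSet.compl
  calc ‖∑ j ∈ Finset.range m, C (-ζ j) f‖ₑ
      = eLpNorm (∑ j ∈ Finset.range m, F j) p μ := by
        rw [Lp.enorm_def, eLpNorm_congr_ae (Lp.coeFn_finsetSum _ _)]
    _ ≤ eLpNorm (∑ j ∈ Finset.range m, (B j).indicator (F j)) p μ
        + ∑ j ∈ Finset.range m, eLpNorm ((B j)ᶜ.indicator (F j)) p μ := by
        rw [hsplit]
        refine (eLpNorm_add_le (Finset.aestronglyMeasurable_sum _ fun j _ => hBF j)
          (Finset.aestronglyMeasurable_sum _ fun j _ => hBF' j) Fact.out).trans ?_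
        gcongr
        exact eLpNorm_sum_le (fun j _ => hBF' j) Fact.out
    _ ≤ _ := by
        gcongr
        simp [htail]

theorem IsFockShiftFamily.hasSmallSpreadAverages (hC : IsFockShiftFamily n α p μ C)
    (hCiso : ∀ (z : Cn n) (u : Lp ℂ p μ), ‖C z u‖ = ‖u‖)
    (hμ : ∀ z, Measure.QuasiMeasurePreserving (· - z) μ μ) (hp1 : 1 < p) (hp : p ≠ ∞)
    (f : Lp ℂ p μ) : HasSmallSpreadAverages (cobounded (Cn n)) fun z => C (-z) f := by
  intro η hη
  have hq : 1 < p.toReal := by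
    simpa using (ENNReal.toReal_lt_toReal ENNReal.one_ne_top hp).2 hp1
  obtain ⟨R, hR⟩ := ((Lp.memLp f).tendsto_eLpNorm_indicator_compl_closedBall
    (zero_lt_one.trans hp1).ne' hp 0 |>.eventually
      (gt_mem_nhds (ENNReal.ofReal_pos.2 (half_pos hη)))).exists
  obtain ⟨m, hm, hmη⟩ := exists_nat_rpow_mul_le (q := 1 / p.toReal)
    ((div_lt_one (by linarith)).2 hq) ‖f‖ (half_pos hη)
  refine ⟨m, hm, fun z z' => ‖z‖ + 2 * R < ‖z'‖,
    fun z => tendsto_norm_cobounded_atTop.eventually_gt_atTop _, fun ζ hζ => ?_⟩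
  have hsum := hC.enorm_sum_le hCiso hμ hp f hζ m
  have htail := ENNReal.toReal_le_of_le_ofReal (half_pos hη).le hR.le
  have hfin : (m : ℝ≥0∞) ^ (1 / p.toReal) * ‖f‖ₑ
      + m * eLpNorm ((Metric.closedBall 0 R)ᶜ.indicator f) p μ ≠ ∞ := by
    finiteness
  calc ‖∑ j ∈ Finset.range m, C (-ζ j) f‖
      ≤ (m : ℝ) ^ (1 / p.toReal) * ‖f‖
        + m * (eLpNorm ((Metric.closedBall 0 R)ᶜ.indicator f) p μ).toReal := by
        have h := ENNReal.toReal_mono hfin hsum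
        rwa [ENNReal.toReal_add (by finiteness) (by finiteness), ENNReal.toReal_mul,
          ENNReal.toReal_mul, ← ENNReal.toReal_rpow, ENNReal.toReal_natCast, toReal_enorm,
          toReal_enorm] at h
    _ ≤ m * (η / 2) + m * (η / 2) := by gcongr
    _ = m * η := by ring

end FockShift

theorem stmt0_general (n : ℕ) (p α : ℝ) (hp : 1 < p) (hα : 0 < α)
    [Fact (1 ≤ pe p)]
    (μ : Measure (Cn n)) (hμ : μ = gaussian n (p * α / 2))
    (C : Cn n → (Lp ℂ (pe p) μ →L[ℂ] Lp ℂ (pe p) μ))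
    (hC : IsFockShiftFamily n α (pe p) μ C)
    (hCiso : ∀ (z : Cn n) (u : Lp ℂ (pe p) μ), ‖C z u‖ = ‖u‖)
    (hCF : ∀ z : Cn n, ∀ u : Lp ℂ (pe p) μ,
      u ∈ fockSubmodule n (pe p) μ → C z u ∈ fockSubmodule n (pe p) μ)
    (H : ↥(fockSubmodule n (pe p) μ) →L[ℂ] Lp ℂ (pe p) μ)
    (hH : IsCompactOperator (⇑H))
    (g : ↥(fockSubmodule n (pe p) μ)) :
    Tendsto (fun z : Cn n => ‖C z (H ⟨C (-z) ↑g, hCF (-z) ↑g g.2⟩)‖)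
      (Bornology.cobounded (Cn n)) (𝓝 0) := by
  subst hμ
  have hμ : ∀ z, Measure.QuasiMeasurePreserving (· - z) (gaussian n (p * α / 2)) _ :=
    gaussian_quasiMeasurePreserving_sub_right (by positivity)
  set x : Cn n → fockSubmodule n (pe p) (gaussian n (p * α / 2)) :=
    fun z => ⟨C (-z) g, hCF (-z) g g.2⟩
  have hx : IsBounded (Set.range x) := isBounded_iff_forall_norm_le.2
    ⟨‖g‖, by rintro _ ⟨z, rfl⟩; simp [x, hCiso]⟩
  have hsmall : HasSmallSpreadAverages (cobounded (Cn n)) x :=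
    .of_coe (hC.hasSmallSpreadAverages hCiso hμ (ENNReal.one_lt_ofReal.2 hp)
      ENNReal.ofReal_ne_top g)
  simpa only [hCiso] using
    tendsto_zero_iff_norm_tendsto_zero.1 (hH.tendsto_zero_of_hasSmallSpreadAverages hx hsmall)

/-- If `H : F^p_α → L^p_α` is a compact operator, then for every `g ∈ F^p_α`
one has `‖C_z H C_{-z} g‖ → 0` as `|z| → ∞`. -/
theorem stmt0 (n : ℕ) (hn : 1 ≤ n) (p α : ℝ) (hp : 1 < p) (hα : 0 < α)
    [Fact (1 ≤ pe p)]
    (μ : Measure (Cn n)) (hμ : μ = gaussian n (p * α / 2))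
    (C : Cn n → (Lp ℂ (pe p) μ →L[ℂ] Lp ℂ (pe p) μ))
    (hC : IsFockShiftFamily n α (pe p) μ C)
    (hCiso : ∀ (z : Cn n) (u : Lp ℂ (pe p) μ), ‖C z u‖ = ‖u‖)
    (hCinv : ∀ z : Cn n, (C z).comp (C (-z)) = ContinuousLinearMap.id ℂ (Lp ℂ (pe p) μ))
    (hCF : ∀ z : Cn n, ∀ u : Lp ℂ (pe p) μ,
      u ∈ fockSubmodule n (pe p) μ → C z u ∈ fockSubmodule n (pe p) μ)
    (H : ↥(fockSubmodule n (pe p) μ) →L[ℂ] Lp ℂ (pe p) μ)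
    (hH : IsCompactOperator (⇑H))
    (g : ↥(fockSubmodule n (pe p) μ)) :
    Tendsto (fun z : Cn n => ‖C z (H ⟨C (-z) ↑g, hCF (-z) ↑g g.2⟩)‖)
      (Bornology.cobounded (Cn n)) (𝓝 0) :=
  stmt0_general n p α hp hα μ hμ C hC hCiso hCF H hH g
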